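/- The multipliers of the Neville elimination of the reverse Bessel coefficient matrix C are m_{ij} = 2i − 1 − 2j for 1 ≤ j < i ≤ n when j is odd, and m_{ij} = 0 when j is even. -/

import Mathlib

/-- Entries of the lower triangular reverse Bessel coefficient matrix. -/
noncomputable def revC (i j : ℕ) : ℝ :=
  if j ≤ i then ((2 * i - j - 1).factorial : ℝ) / (2 ^ (i - j) * (j - 1).factorial * (i - j).factorial)
  else 0

/-- `revNE k i j` is the `(i,j)` entry of `C^{(k+1)}`, the matrix obtained after `k`
steps of Neville elimination of the reverse Bessel coefficient matrix. -/
noncomputable def revNE : ℕ → ℕ → ℕ → ℝ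
  | 0, i, j => revC i j
  | k + 1, i, j =>
      if k + 1 ≤ j ∧ j < i ∧ revNE k (i - 1) (k + 1) ≠ 0 then
        revNE k i j - revNE k i (k + 1) / revNE k (i - 1) (k + 1) * revNE k (i - 1) j
      else revNE k i j

/-!
Neville elimination of `C` proceeds in pairs of steps, each pair turning the block matrix
`diag(I_{2r}, C)` into `diag(I_{2r+2}, C)`. In the first step of a pair, the multiplier of row
`i` of the `C` block is `c_{i,1} / c_{i-1,1} = 2i - 3`; subtracting `2i - 3` times row `i - 1`
clears the first two columns of the block (its second column equals its first one below the
diagonal) and, by the recurrence `c_{i+2,j+2} = (2i+1) c_{i+1,j+2} + c_{i,j}`, leaves a copy of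
`C` shifted by two. In the second step the pivot column is a column of the identity, so the
entries below the pivot vanish and nothing changes.
-/

lemma revC_of_lt {i j : ℕ} (h : i < j) : revC i j = 0 := if_neg (by omega)

lemma revC_self (i : ℕ) : revC i i = 1 := by
  have : ((i - 1).factorial : ℝ) ≠ 0 := by positivity
  simp [revC, show 2 * i - i - 1 = i - 1 by omega, this]

lemma revC_succ_one (a : ℕ) :
    revC (a + 1) 1 = ((2 * a).factorial : ℝ) / (2 ^ a * a.factorial) := by
  simp [revC, show 2 * (a + 1) - 1 - 1 = 2 * a by omega]

lemma revC_succ_one_pos (a : ℕ) : 0 < revC (a + 1) 1 := by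
  rw [revC_succ_one]
  positivity

lemma revC_add_two_one (a : ℕ) : revC (a + 2) 1 = (2 * a + 1) * revC (a + 1) 1 := by
  rw [revC_succ_one, revC_succ_one, show 2 * (a + 1) = 2 * a + 1 + 1 by ring,
    Nat.factorial_succ, Nat.factorial_succ, Nat.factorial_succ, pow_succ]
  push_cast
  field_simp
  ring

lemma revC_two {i : ℕ} (hi : 2 ≤ i) : revC i 2 = revC i 1 := by
  obtain ⟨a, rfl⟩ : ∃ a, i = a + 2 := ⟨i - 2, by omega⟩
  rw [revC_succ_one, revC, if_pos hi, show 2 * (a + 2) - 2 - 1 = 2 * a + 1 by omega,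
    show a + 2 - 2 = a by omega, show 2 * (a + 1) = 2 * a + 1 + 1 by ring,
    Nat.factorial_succ (2 * a + 1), Nat.factorial_succ a, pow_succ]
  push_cast
  field_simp
  ring

lemma revC_add_two_add_two {i j : ℕ} (hj : 1 ≤ j) (hji : j < i) :
    revC (i + 2) (j + 2) = (2 * i + 1) * revC (i + 1) (j + 2) + revC i j := by
  obtain ⟨c, rfl⟩ : ∃ c, j = c + 1 := ⟨j - 1, by omega⟩
  obtain ⟨s, rfl⟩ : ∃ s, i = c + s + 2 := ⟨i - c - 2, by omega⟩
  simp only [revC, if_pos (show c + 1 + 2 ≤ c + s + 2 + 2 by omega),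
    if_pos (show c + 1 + 2 ≤ c + s + 2 + 1 by omega), if_pos (show c + 1 ≤ c + s + 2 by omega)]
  rw [show 2 * (c + s + 2 + 2) - (c + 1 + 2) - 1 = c + 2 * s + 2 + 1 + 1 by omega,
    show c + s + 2 + 2 - (c + 1 + 2) = s + 1 by omega,
    show 2 * (c + s + 2 + 1) - (c + 1 + 2) - 1 = c + 2 * s + 2 by omega,
    show c + s + 2 + 1 - (c + 1 + 2) = s by omega,
    show 2 * (c + s + 2) - (c + 1) - 1 = c + 2 * s + 2 by omega,
    show c + s + 2 - (c + 1) = s + 1 by omega,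
    show c + 1 + 2 - 1 = c + 1 + 1 by omega, show c + 1 - 1 = c by omega,
    Nat.factorial_succ (c + 2 * s + 2 + 1), Nat.factorial_succ (c + 2 * s + 2),
    Nat.factorial_succ (c + 1), Nat.factorial_succ c, Nat.factorial_succ s, pow_succ]
  push_cast
  field_simp
  ring

lemma revC_row_reduce {a b : ℕ} (hba : b ≤ a) :
    revC (a + 2) (b + 1) - (2 * a + 1) * revC (a + 1) (b + 1) =
      if b ≤ 1 then 0 else revC a (b - 1) := by
  rcases b with _ | _ | c
  · rw [revC_add_two_one]; simp
  · rw [revC_two (by omega), revC_two (by omega), revC_add_two_one]; simp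
  · rw [if_neg (by omega), Nat.add_sub_cancel, show c + 1 + 1 + 1 = c + 1 + 2 from rfl,
      revC_add_two_add_two (by omega) (by omega)]
    ring

/-- The block-diagonal matrix `diag(I_{2r}, C)`: for `i ≤ 2r < j` truncated subtraction makes the
entry `revC 0 _ = 0`. -/
noncomputable def revCBlock (r i j : ℕ) : ℝ :=
  if j ≤ 2 * r then (if i = j then 1 else 0) else revC (i - 2 * r) (j - 2 * r)

lemma revCBlock_of_le {r i j : ℕ} (hij : i ≤ j) : revCBlock r i j = if i = j then 1 else 0 := by
  unfold revCBlock
  split_ifs with hj heq heq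
  · rfl
  · rfl
  · rw [heq, revC_self]
  · exact revC_of_lt (by omega)

lemma revCBlock_pivot (r i : ℕ) : revCBlock r i (2 * r + 1) = revC (i - 2 * r) 1 := by
  simp [revCBlock]

lemma revNE_even_step {r : ℕ} (h : ∀ i j, 1 ≤ j → revNE (2 * r) i j = revCBlock r i j)
    (i j : ℕ) (hj : 1 ≤ j) : revNE (2 * r + 1) i j = revCBlock (r + 1) i j := by
  rw [revNE, h i j hj, h i _ (by omega), h (i - 1) _ (by omega), h (i - 1) j hj,
    revCBlock_pivot, revCBlock_pivot]
  by_cases hact : 2 * r + 1 ≤ j ∧ j < i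
  · obtain ⟨a, rfl⟩ : ∃ a, i = 2 * r + a + 2 := ⟨i - 2 * r - 2, by omega⟩
    obtain ⟨b, rfl⟩ : ∃ b, j = 2 * r + b + 1 := ⟨j - 2 * r - 1, by omega⟩
    have hpiv : revC (a + 1) 1 ≠ 0 := (revC_succ_one_pos a).ne'
    rw [show 2 * r + a + 2 - 2 * r = a + 2 by omega,
      show 2 * r + a + 2 - 1 - 2 * r = a + 1 by omega, if_pos ⟨hact.1, hact.2, hpiv⟩,
      revC_add_two_one, mul_div_assoc, div_self hpiv, mul_one]
    simp only [revCBlock, if_neg (show ¬ 2 * r + b + 1 ≤ 2 * r by omega),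
      show 2 * r + a + 2 - 1 - 2 * r = a + 1 by omega, show 2 * r + a + 2 - 2 * r = a + 2 by omega,
      show 2 * r + b + 1 - 2 * r = b + 1 by omega, revC_row_reduce (show b ≤ a by omega),
      show 2 * r + a + 2 - 2 * (r + 1) = a by omega,
      show 2 * r + b + 1 - 2 * (r + 1) = b - 1 by omega]
    split_ifs <;> first | rfl | omega
  · rw [if_neg (fun h => hact ⟨h.1, h.2.1⟩)]
    rcases le_or_gt i j with hij | hji
    · rw [revCBlock_of_le hij, revCBlock_of_le hij]
    · simp only [revCBlock, if_pos (show j ≤ 2 * r by omega),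
        if_pos (show j ≤ 2 * (r + 1) by omega)]

lemma revNE_odd_step {r : ℕ}
    (h : ∀ i j, 1 ≤ j → revNE (2 * r + 1) i j = revCBlock (r + 1) i j) (i j : ℕ)
    (hj : 1 ≤ j) : revNE (2 * r + 2) i j = revCBlock (r + 1) i j := by
  have hcol : ∀ i', revCBlock (r + 1) i' (2 * r + 2) = if i' = 2 * r + 2 then 1 else 0 :=
    fun i' => if_pos (by omega)
  rw [revNE, h i j hj, h i _ (by omega), h (i - 1) _ (by omega), h (i - 1) j hj]
  by_cases hact : 2 * r + 2 ≤ j ∧ j < i ∧ revCBlock (r + 1) (i - 1) (2 * r + 2) ≠ 0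
  · have hi : i - 1 = 2 * r + 2 := by
      by_contra hne
      exact hact.2.2 (by rw [hcol, if_neg hne])
    rw [if_pos hact, hcol i, if_neg (by omega), zero_div, zero_mul, sub_zero]
  · rw [if_neg hact]

lemma revNE_eq_revCBlock (r : ℕ) :
    (∀ i j, 1 ≤ j → revNE (2 * r) i j = revCBlock r i j) ∧
      ∀ i j, 1 ≤ j → revNE (2 * r + 1) i j = revCBlock (r + 1) i j := by
  induction r with
  | zero =>
    have base : ∀ i j, 1 ≤ j → revNE (2 * 0) i j = revCBlock 0 i j := fun i j hj => by
      simp [revNE, revCBlock, show ¬ j ≤ 0 by omega]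
    exact ⟨base, revNE_even_step base⟩
  | succ r ih =>
    have even : ∀ i j, 1 ≤ j → revNE (2 * (r + 1)) i j = revCBlock (r + 1) i j :=
      revNE_odd_step ih.2
    exact ⟨even, revNE_even_step even⟩

lemma revNE_pred_self {i j : ℕ} (hj : 1 ≤ j) : revNE (j - 1) i j = revCBlock (j / 2) i j := by
  obtain ⟨s, rfl | rfl⟩ := Nat.even_or_odd' j
  · obtain ⟨t, rfl⟩ : ∃ t, s = t + 1 := ⟨s - 1, by omega⟩
    rw [show 2 * (t + 1) - 1 = 2 * t + 1 by omega, show 2 * (t + 1) / 2 = t + 1 by omega]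
    exact (revNE_eq_revCBlock t).2 i _ hj
  · rw [show 2 * s + 1 - 1 = 2 * s by omega, show (2 * s + 1) / 2 = s by omega]
    exact (revNE_eq_revCBlock s).1 i _ hj

theorem revBessel_NE_multipliers (n : ℕ) :
    let p : ℕ → ℕ → ℝ := fun i j => revNE (j - 1) i j
    let m : ℕ → ℕ → ℝ := fun i j => if p (i - 1) j ≠ 0 then p i j / p (i - 1) j else 0
    ∀ i j : ℕ, 1 ≤ j → j < i → i ≤ n →
      (Odd j → m i j = ((2 * i - 1 - 2 * j : ℕ) : ℝ)) ∧ (Even j → m i j = 0) := by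
  intro p m i j hj hji _
  constructor
  · rintro ⟨s, rfl⟩
    obtain ⟨t, rfl⟩ : ∃ t, i = 2 * s + t + 2 := ⟨i - 2 * s - 2, by omega⟩
    have hp : ∀ i', p i' (2 * s + 1) = revC (i' - 2 * s) 1 := fun i' => by
      simp only [p, revNE_pred_self hj, show (2 * s + 1) / 2 = s by omega, revCBlock_pivot]
    have hpiv : revC (t + 1) 1 ≠ 0 := (revC_succ_one_pos t).ne'
    simp only [m, hp, show 2 * s + t + 2 - 1 - 2 * s = t + 1 by omega,
      show 2 * s + t + 2 - 2 * s = t + 2 by omega, if_pos hpiv, revC_add_two_one,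
      mul_div_assoc, div_self hpiv, mul_one,
      show 2 * (2 * s + t + 2) - 1 - 2 * (2 * s + 1) = 2 * t + 1 by omega]
    push_cast
    ring
  · rintro ⟨s, rfl⟩
    have hzero : p i (s + s) = 0 := by
      simp only [p, revNE_pred_self hj, revCBlock,
        if_pos (show s + s ≤ 2 * ((s + s) / 2) by omega), if_neg (show i ≠ s + s by omega)]
    simp [m, hzero]
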